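/- arXiv:2509.19835 — 2 statements merged into one kernel-verified Lean document; each statement's English description precedes it below -/
import Mathlib

section
/- Let n ≥ 1, μ a modulus of continuity, α = min{2, 1+2/n}, and γ ≥ 1. Suppose u : [0,T]×ℝⁿ → ℝ satisfies ‖u(τ)‖_{L^α} ≤ A(1+τ)^{-(n/2)(1−1/α)} and ‖u(τ)‖_{L^∞} ≤ A(1+τ)^{-n/2} with A ≤ ε₀ ≤ 1. Then the nonlinearity N(u) = |u|^{1+2/n}μ(|u|) satisfies ‖N(u(τ))‖_{L^γ} ≤ C μ(ε₀(1+τ)^{-n/2}) (1+τ)^{-(n/2)(1+2/n−1/γ)} A^{1+2/n}. -/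
open MeasureTheory Set Filter
open scoped ENNReal

/-- If `‖u(τ)‖_{L^α} ≤ A(1+τ)^{-(n/2)(1−1/α)}` and
`‖u(τ)‖_{L^∞} ≤ A(1+τ)^{-n/2}` with `A ≤ ε₀ ≤ 1`, `α = min{2, 1+2/n}`, then the
nonlinearity `N(u) = |u|^{1+2/n}μ(|u|)` satisfies
`‖N(u(τ))‖_{L^γ} ≤ C μ(ε₀(1+τ)^{-n/2}) (1+τ)^{-(n/2)(1+2/n−1/γ)} A^{1+2/n}`. -/
theorem nonlinearity_Lgamma_estimate
    (n : ℕ) (hn : 1 ≤ n)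
    (μ : ℝ → ℝ)
    (hcont : ContinuousOn μ (Ici 0))
    (hconc : ConcaveOn ℝ (Ici 0) μ)
    (hmono : MonotoneOn μ (Ici 0))
    (hnonneg : ∀ s ∈ Ici (0:ℝ), 0 ≤ μ s)
    (hμ0 : μ 0 = 0)
    (γ : ℝ) (hγ : 1 ≤ γ) :
    ∃ C : ℝ, 0 < C ∧
      ∀ (T : ℝ) (u : ℝ → EuclideanSpace ℝ (Fin n) → ℝ) (A ε₀ : ℝ),
        0 < A → A ≤ ε₀ → ε₀ ≤ 1 →
        ∀ τ ∈ Icc (0:ℝ) T,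
          AEStronglyMeasurable (u τ) volume →
          eLpNorm (u τ) (ENNReal.ofReal (min 2 (1 + 2/(n:ℝ)))) volume
            ≤ ENNReal.ofReal
                (A * (1+τ) ^ (-(n:ℝ)/2 * (1 - 1/(min 2 (1 + 2/(n:ℝ)))))) →
          eLpNorm (u τ) ∞ volume ≤ ENNReal.ofReal (A * (1+τ) ^ (-(n:ℝ)/2)) →
          eLpNorm (fun x => |u τ x| ^ (1 + 2/(n:ℝ)) * μ (|u τ x|))
              (ENNReal.ofReal γ) volume
            ≤ ENNReal.ofReal
                (C * μ (ε₀ * (1+τ) ^ (-(n:ℝ)/2))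
                  * (1+τ) ^ (-(n:ℝ)/2 * (1 + 2/(n:ℝ) - 1/γ))
                  * A ^ (1 + 2/(n:ℝ))) := by
  have hn0 : (0:ℝ) < n := by exact_mod_cast hn
  set p : ℝ := 1 + 2/(n:ℝ) with hp_def
  have hp1 : 1 < p := by
    have : (0:ℝ) < 2/(n:ℝ) := by positivity
    simp only [hp_def]; linarith
  set α : ℝ := min 2 p with hα_def
  have hα1 : 1 < α := lt_min one_lt_two hp1
  have hαp : α ≤ p := min_le_right _ _
  have hγ0 : (0:ℝ) < γ := lt_of_lt_of_le one_pos hγ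
  set β : ℝ := α / γ with hβ_def
  have hβ0 : 0 < β := div_pos (by linarith) hγ0
  have hβα : β ≤ α := div_le_self (by linarith) hγ
  have hβp : β ≤ p := hβα.trans hαp
  have hγβ : γ * β = α := by
    rw [hβ_def]; field_simp
  refine ⟨1, one_pos, ?_⟩
  intro T u A ε₀ hA hAε hε1 τ hτ hmeas hLα hLinf
  set t : ℝ := 1 + τ with ht_def
  have ht : (0:ℝ) < t := by have := hτ.1; simp only [ht_def]; linarith
  set M : ℝ := A * t ^ (-(n:ℝ)/2) with hM_def
  have hM0 : 0 < M := mul_pos hA (Real.rpow_pos_of_pos ht _)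
  set E : ℝ := ε₀ * t ^ (-(n:ℝ)/2) with hE_def
  have hME : M ≤ E := mul_le_mul_of_nonneg_right hAε (Real.rpow_pos_of_pos ht _).le
  have hE0 : 0 < E := lt_of_lt_of_le hM0 hME
  have hμE : 0 ≤ μ E := hnonneg E (mem_Ici.mpr hE0.le)
  -- a.e. bound from L^∞ norm
  have hae : ∀ᵐ x ∂(volume : Measure (EuclideanSpace ℝ (Fin n))), |u τ x| ≤ M := by
    filter_upwards [ae_le_eLpNormEssSup (f := u τ) (μ := volume)] with x hx
    have h2 : (‖u τ x‖₊ : ℝ≥0∞) ≤ ENNReal.ofReal M :=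
      le_trans hx (by rwa [eLpNorm_exponent_top] at hLinf)
    rwa [← enorm_eq_nnnorm, ← ofReal_norm,
      ENNReal.ofReal_le_ofReal_iff hM0.le, Real.norm_eq_abs] at h2
  set c : ℝ := μ E * M ^ (p - β) with hc_def
  have hc0 : 0 ≤ c := mul_nonneg hμE (Real.rpow_nonneg hM0.le _)
  -- pointwise bound
  have hptw : ∀ᵐ x ∂(volume : Measure (EuclideanSpace ℝ (Fin n))),
      ‖|u τ x| ^ p * μ (|u τ x|)‖ ≤ ‖c * ‖u τ x‖ ^ β‖ := by
    filter_upwards [hae] with x hx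
    have hux : (0:ℝ) ≤ |u τ x| := abs_nonneg _
    have hμu : 0 ≤ μ (|u τ x|) := hnonneg _ (mem_Ici.mpr hux)
    have h1 : |u τ x| ^ p = |u τ x| ^ β * |u τ x| ^ (p - β) := by
      rw [← Real.rpow_add' hux (by simp; linarith)]
      ring_nf
    calc ‖|u τ x| ^ p * μ (|u τ x|)‖ = |u τ x| ^ p * μ (|u τ x|) := by
          rw [Real.norm_eq_abs,
            abs_of_nonneg (mul_nonneg (Real.rpow_nonneg hux _) hμu)]
      _ = |u τ x| ^ β * (|u τ x| ^ (p - β) * μ (|u τ x|)) := by rw [h1]; ring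
      _ ≤ |u τ x| ^ β * (M ^ (p - β) * μ E) :=
          mul_le_mul_of_nonneg_left
            (mul_le_mul (Real.rpow_le_rpow hux hx (by linarith))
              (hmono (mem_Ici.mpr hux) (mem_Ici.mpr hE0.le) (hx.trans hME))
              hμu (Real.rpow_nonneg hM0.le _))
            (Real.rpow_nonneg hux _)
      _ = c * ‖u τ x‖ ^ β := by rw [hc_def, Real.norm_eq_abs]; ring
      _ ≤ ‖c * ‖u τ x‖ ^ β‖ := le_abs_self _
  have hαne : α ≠ 0 := by linarith
  -- main norm estimate
  have key : eLpNorm (fun x => |u τ x| ^ p * μ (|u τ x|)) (ENNReal.ofReal γ) volume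
      ≤ ENNReal.ofReal c *
        (ENNReal.ofReal (A * t ^ (-(n:ℝ)/2 * (1 - 1/α)))) ^ β := by
    calc eLpNorm (fun x => |u τ x| ^ p * μ (|u τ x|)) (ENNReal.ofReal γ) volume
        ≤ eLpNorm (fun x => c * ‖u τ x‖ ^ β) (ENNReal.ofReal γ) volume :=
          eLpNorm_mono_ae hptw
      _ = ENNReal.ofReal c *
          eLpNorm (fun x => ‖u τ x‖ ^ β) (ENNReal.ofReal γ) volume := by
          have := eLpNorm_const_smul (c := c) (f := fun x => ‖u τ x‖ ^ β)
            (p := ENNReal.ofReal γ) (μ := (volume : Measure (EuclideanSpace ℝ (Fin n))))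
          simpa [Real.enorm_eq_ofReal hc0, Pi.smul_def, smul_eq_mul] using this
      _ = ENNReal.ofReal c *
          eLpNorm (u τ) (ENNReal.ofReal γ * ENNReal.ofReal β) volume ^ β := by
          rw [eLpNorm_norm_rpow (u τ) hβ0]
      _ = ENNReal.ofReal c * eLpNorm (u τ) (ENNReal.ofReal α) volume ^ β := by
          rw [← ENNReal.ofReal_mul hγ0.le, hγβ]
      _ ≤ _ := by gcongr
  -- rewrite RHS of key as a single ofReal and compare reals
  have hbase : 0 ≤ A * t ^ (-(n:ℝ)/2 * (1 - 1/α)) := by positivity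
  rw [ENNReal.ofReal_rpow_of_nonneg hbase hβ0.le, ← ENNReal.ofReal_mul hc0] at key
  refine key.trans (le_of_eq (congrArg ENNReal.ofReal ?_))
  -- real computation
  have hexp : -(n:ℝ)/2 * (p - β) + (-(n:ℝ)/2 * (1 - 1/α)) * β = -(n:ℝ)/2 * (p - 1/γ) := by
    have hβα' : β / α = 1 / γ := by
      rw [hβ_def]; field_simp
    have : β * (1/α) = 1/γ := by
      rw [← hβα']; field_simp
    nlinarith [this]
  rw [hc_def, hM_def]
  rw [Real.mul_rpow hA.le (Real.rpow_nonneg ht.le _),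
      Real.mul_rpow hA.le (Real.rpow_nonneg ht.le _),
      ← Real.rpow_mul ht.le, ← Real.rpow_mul ht.le]
  have hAcomb : A ^ (p - β) * A ^ β = A ^ p := by
    rw [← Real.rpow_add hA]; ring_nf
  have htcomb : t ^ (-(n:ℝ)/2 * (p - β)) * t ^ (-(n:ℝ)/2 * (1 - 1/α) * β)
      = t ^ (-(n:ℝ)/2 * (p - 1/γ)) := by
    rw [← Real.rpow_add ht, hexp]
  calc μ E * (A ^ (p - β) * t ^ (-(n:ℝ)/2 * (p - β))) *
        (A ^ β * t ^ (-(n:ℝ)/2 * (1 - 1/α) * β))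
      = μ E * (A ^ (p - β) * A ^ β) *
        (t ^ (-(n:ℝ)/2 * (p - β)) * t ^ (-(n:ℝ)/2 * (1 - 1/α) * β)) := by ring
    _ = μ E * A ^ p * t ^ (-(n:ℝ)/2 * (p - 1/γ)) := by rw [hAcomb, htcomb]
    _ = 1 * μ E * t ^ (-(n:ℝ)/2 * (p - 1/γ)) * A ^ p := by ring
end

section
/- Suppose Y : [R₀, ∞) → (0,∞) is differentiable with Y' ≥ 0, and suppose for constants A, B > 0, n ≥ 1, and a nonnegative function h(r) = μ(C r^{-n/2})/r: (i) Y'(R) ≥ A ε^{1+2/n} h(R) for all R ∈ [R₀, T], and (ii) h(R) ≤ B Y'(R)/Y(R)^{1+2/n} for all R ∈ [R₀, T]. Let φ(R) satisfy ∫_{R₀}^{φ(R)} h = ∫_{φ(R)}^{R} h = Ψ_{R₀}(R)/2 where Ψ_{R₀}(R) = ∫_{R₀}^R h. Then Ψ_{R₀}(T) ≤ C' ε^{-2/n} for a constant C' depending only on A, B, n. -/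
set_option maxHeartbeats 1000000


open MeasureTheory Set Filter

private lemma mono_of_hasDerivAt_aux {f f' : ℝ → ℝ} {a b : ℝ} (hab : a ≤ b)
    (hd : ∀ x ∈ Icc a b, HasDerivAt f (f' x) x) (h0 : ∀ x ∈ Icc a b, 0 ≤ f' x) :
    f a ≤ f b := by
  have hc : ContinuousOn f (Icc a b) := fun x hx =>
    (hd x hx).continuousAt.continuousWithinAt
  have hdiff : DifferentiableOn ℝ f (interior (Icc a b)) := fun x hx =>
    ((hd x (interior_subset hx)).differentiableAt).differentiableWithinAt
  have hnn : ∀ x ∈ interior (Icc a b), 0 ≤ deriv f x := fun x hx => by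
    rw [(hd x (interior_subset hx)).deriv]; exact h0 x (interior_subset hx)
  exact monotoneOn_of_deriv_nonneg (convex_Icc a b) hc hdiff hnn
    (left_mem_Icc.2 hab) (right_mem_Icc.2 hab) hab

/-- key ODE comparison for the lifespan upper bound.  If
`Y' ≥ A ε^{1+2/n} h` and `h ≤ B Y'/Y^{1+2/n}` on `[R₀,T]`, where
`h(r) = μ(C r^{-n/2})/r` and `φ(R)` splits `Ψ_{R₀}(R) = ∫_{R₀}^R h` in half,
then `Ψ_{R₀}(T) ≤ C' ε^{-2/n}` with `C'` depending only on `A, B, n`. -/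
theorem lifespan_upper_bound_comparison
    (n : ℕ) (hn : 1 ≤ n) (A B : ℝ) (hA : 0 < A) (hB : 0 < B) :
    ∃ C' : ℝ, 0 < C' ∧
      ∀ (μ : ℝ → ℝ) (C R₀ T ε : ℝ) (Y Y' φ : ℝ → ℝ),
        ContinuousOn μ (Ici 0) →
        MonotoneOn μ (Ici 0) →
        (∀ s ∈ Ici (0:ℝ), 0 ≤ μ s) →
        μ 0 = 0 →
        0 < C → 1 ≤ R₀ → R₀ ≤ T → 0 < ε →
        (∀ R ∈ Icc R₀ T, HasDerivAt Y (Y' R) R ∧ 0 < Y R ∧ 0 ≤ Y' R) →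
        (∀ R ∈ Icc R₀ T,
          A * ε ^ (1 + 2/(n:ℝ)) * (μ (C * R ^ (-(n:ℝ)/2)) / R) ≤ Y' R) →
        (∀ R ∈ Icc R₀ T,
          μ (C * R ^ (-(n:ℝ)/2)) / R ≤ B * Y' R / (Y R) ^ (1 + 2/(n:ℝ))) →
        (∀ R ∈ Icc R₀ T, φ R ∈ Icc R₀ R ∧
          (∫ r in R₀..(φ R), μ (C * r ^ (-(n:ℝ)/2)) / r)
            = (∫ r in R₀..R, μ (C * r ^ (-(n:ℝ)/2)) / r) / 2 ∧
          (∫ r in (φ R)..R, μ (C * r ^ (-(n:ℝ)/2)) / r)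
            = (∫ r in R₀..R, μ (C * r ^ (-(n:ℝ)/2)) / r) / 2) →
        (∫ r in R₀..T, μ (C * r ^ (-(n:ℝ)/2)) / r) ≤ C' * ε ^ (-(2:ℝ)/(n:ℝ)) := by
  have hn0 : (0:ℝ) < (n:ℝ) := by exact_mod_cast Nat.lt_of_lt_of_le Nat.zero_lt_one hn
  set s : ℝ := 2/(n:ℝ) with hsdef
  have hs0 : 0 < s := by positivity
  set p : ℝ := 1 + s with hpdef
  have hp0 : 0 < p := by positivity
  have hpne : p ≠ 0 := ne_of_gt hp0
  set C' : ℝ := (B * n * (2/A) ^ s) ^ p⁻¹ with hC'def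
  have hK0 : 0 < B * (n:ℝ) * (2/A) ^ s := by
    have := Real.rpow_pos_of_pos (by positivity : (0:ℝ) < 2/A) s
    positivity
  refine ⟨C', Real.rpow_pos_of_pos hK0 _, ?_⟩
  intro μ C R₀ T ε Y Y' φ hμc hμm hμ0 hμz hC hR₀ hRT hε hY hi hii hφ
  set F : ℝ → ℝ := fun r => μ (C * r ^ (-(n:ℝ)/2)) / r with hFdef
  have hR₀0 : (0:ℝ) < R₀ := lt_of_lt_of_le one_pos hR₀
  have hIccSub : Icc R₀ T ⊆ Ioi (0:ℝ) := fun x hx => lt_of_lt_of_le hR₀0 hx.1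
  -- continuity of F on Ioi 0
  have hFc : ContinuousOn F (Ioi (0:ℝ)) := by
    apply ContinuousOn.div
    · apply hμc.comp
      · exact continuousOn_const.mul (fun x hx =>
          (Real.continuousAt_rpow_const x _ (Or.inl (ne_of_gt hx))).continuousWithinAt)
      · intro x hx
        exact mul_nonneg hC.le (Real.rpow_nonneg (le_of_lt hx) _)
    · exact continuousOn_id
    · exact fun x hx => ne_of_gt hx
  have hFnn : ∀ r ∈ Ioi (0:ℝ), 0 ≤ F r := fun r hr =>
    div_nonneg (hμ0 _ (mul_nonneg hC.le (Real.rpow_nonneg (le_of_lt hr) _))) (le_of_lt hr)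
  -- the primitive H
  set H : ℝ → ℝ := fun x => ∫ r in R₀..x, F r with hHdef
  have hint : ∀ a b : ℝ, 0 < a → 0 < b → IntervalIntegrable F volume a b := by
    intro a b ha hb
    apply ContinuousOn.intervalIntegrable
    apply hFc.mono
    intro y hy
    exact lt_of_lt_of_le (lt_min ha hb) hy.1
  have hH : ∀ x ∈ Icc R₀ T, HasDerivAt H (F x) x := by
    intro x hx
    have hx0 : x ∈ Ioi (0:ℝ) := hIccSub hx
    exact intervalIntegral.integral_hasDerivAt_right (hint R₀ x hR₀0 hx0)
      (ContinuousOn.stronglyMeasurableAtFilter isOpen_Ioi hFc x hx0)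
      (hFc.continuousAt (isOpen_Ioi.mem_nhds hx0))
  obtain ⟨hcmem, e1, e2⟩ := hφ T ⟨hRT, le_refl T⟩
  set c : ℝ := φ T with hcdef
  have hc1 : R₀ ≤ c := hcmem.1
  have hc2 : c ≤ T := hcmem.2
  have hcIcc : c ∈ Icc R₀ T := ⟨hc1, hc2⟩
  have e1' : H c = H T / 2 := e1
  set Ψ : ℝ := H T with hΨdef
  have hΨnn : 0 ≤ Ψ := by
    apply intervalIntegral.integral_nonneg hRT
    intro u hu
    exact hFnn u (hIccSub hu)
  -- Step 1 : Y c ≥ A ε^p Ψ/2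
  have hεp : 0 < ε ^ p := Real.rpow_pos_of_pos hε p
  have key1 : A * ε ^ p * (Ψ / 2) ≤ Y c := by
    have hmono := mono_of_hasDerivAt_aux (f := fun R => Y R - (A * ε ^ p) * H R)
      (f' := fun R => Y' R - (A * ε ^ p) * F R) hc1 ?_ ?_
    · have hH0 : H R₀ = 0 := intervalIntegral.integral_same
      have hYR₀ : 0 < Y R₀ := (hY R₀ ⟨le_refl _, hRT⟩).2.1
      simp only [hH0, mul_zero, sub_zero] at hmono
      rw [← e1']
      nlinarith
    · intro x hx
      have hx' : x ∈ Icc R₀ T := ⟨hx.1, le_trans hx.2 hc2⟩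
      exact ((hY x hx').1).sub ((hH x hx').const_mul _)
    · intro x hx
      have hx' : x ∈ Icc R₀ T := ⟨hx.1, le_trans hx.2 hc2⟩
      have := hi x hx'
      simp only [hFdef]
      nlinarith [this]
  -- Step 2 : Ψ/2 ≤ (B n / 2) (Y c)^{-s}
  have key2 : Ψ / 2 ≤ (B * (n:ℝ) / 2) * Y c ^ (-s) := by
    have hmono := mono_of_hasDerivAt_aux
      (f := fun R => (B * (n:ℝ) / 2) * (- (Y R ^ (-s))) - H R)
      (f' := fun R => (B * (n:ℝ) / 2) * (- (Y' R * (-s) * Y R ^ (-s - 1))) - F R)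
      hc2 ?_ ?_
    · have hYT : 0 ≤ Y T ^ (-s) := Real.rpow_nonneg (le_of_lt (hY T ⟨hRT, le_refl T⟩).2.1) _
      have hBn : 0 < B * (n:ℝ) / 2 := by positivity
      -- hmono : f c ≤ f T
      have : Ψ - H c ≤ (B * (n:ℝ) / 2) * (Y c ^ (-s) - Y T ^ (-s)) := by nlinarith [hmono]
      rw [e1'] at this
      nlinarith
    · intro x hx
      have hx' : x ∈ Icc R₀ T := ⟨le_trans hc1 hx.1, hx.2⟩
      have hYx : 0 < Y x := (hY x hx').2.1
      exact ((((hY x hx').1).rpow_const (Or.inl (ne_of_gt hYx))).neg.const_mul _).sub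
        (hH x hx')
    · intro x hx
      have hx' : x ∈ Icc R₀ T := ⟨le_trans hc1 hx.1, hx.2⟩
      have hYx : 0 < Y x := (hY x hx').2.1
      have h2 := hii x hx'
      have hrw : Y x ^ (-s - 1) = (Y x ^ p)⁻¹ := by
        rw [show -s - 1 = -p by rw [hpdef]; ring, Real.rpow_neg (le_of_lt hYx)]
      have hYp : 0 < Y x ^ p := Real.rpow_pos_of_pos hYx p
      have h2' : F x ≤ B * Y' x / Y x ^ p := h2
      have heq : (B * (n:ℝ) / 2) * (- (Y' x * (-s) * Y x ^ (-s - 1)))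
          = B * Y' x / Y x ^ p := by
        rw [hrw, hsdef]
        field_simp
      simp only [heq]
      linarith
  -- combine
  show Ψ ≤ C' * ε ^ (-(2:ℝ)/(n:ℝ))
  have hRHSnn : 0 ≤ C' * ε ^ (-(2:ℝ)/(n:ℝ)) := by
    have := Real.rpow_pos_of_pos hε (-(2:ℝ)/(n:ℝ))
    have := Real.rpow_pos_of_pos hK0 p⁻¹
    positivity
  rcases eq_or_lt_of_le hΨnn with hΨ0 | hΨpos
  · rw [← hΨ0]; exact hRHSnn
  -- now Ψ > 0
  have ha0 : 0 < A * ε ^ p * (Ψ / 2) := by positivity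
  have hYc : 0 < Y c := (hY c hcIcc).2.1
  have hstep : Y c ^ (-s) ≤ (A * ε ^ p * (Ψ / 2)) ^ (-s) :=
    Real.rpow_le_rpow_of_nonpos ha0 key1 (by linarith)
  have hmain : Ψ ≤ B * (n:ℝ) * (A * ε ^ p * (Ψ / 2)) ^ (-s) := by
    have h3 : (B * (n:ℝ) / 2) * Y c ^ (-s)
        ≤ (B * (n:ℝ) / 2) * (A * ε ^ p * (Ψ / 2)) ^ (-s) :=
      mul_le_mul_of_nonneg_left hstep (by positivity)
    linarith
  -- expand the rpow of the product
  have hexp : (A * ε ^ p * (Ψ / 2)) ^ (-s)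
      = (A / 2 * ε ^ p) ^ (-s) * Ψ ^ (-s) := by
    rw [show A * ε ^ p * (Ψ / 2) = (A / 2 * ε ^ p) * Ψ by ring,
      Real.mul_rpow (by positivity) (le_of_lt hΨpos)]
  have hΨs : 0 < Ψ ^ s := Real.rpow_pos_of_pos hΨpos s
  have hΨp : Ψ ^ p = Ψ * Ψ ^ s := by
    rw [hpdef, Real.rpow_add hΨpos, Real.rpow_one]
  have hcancel : Ψ ^ (-s) * Ψ ^ s = 1 := by
    rw [← Real.rpow_add hΨpos]; simp
  have hΨple : Ψ ^ p ≤ B * (n:ℝ) * (A / 2 * ε ^ p) ^ (-s) := by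
    rw [hΨp]
    calc Ψ * Ψ ^ s ≤ (B * (n:ℝ) * ((A / 2 * ε ^ p) ^ (-s) * Ψ ^ (-s))) * Ψ ^ s := by
          rw [← hexp]; exact mul_le_mul_of_nonneg_right hmain (le_of_lt hΨs)
      _ = B * (n:ℝ) * (A / 2 * ε ^ p) ^ (-s) * (Ψ ^ (-s) * Ψ ^ s) := by ring
      _ = B * (n:ℝ) * (A / 2 * ε ^ p) ^ (-s) := by rw [hcancel, mul_one]
  -- take p⁻¹ power
  have hAε : (A / 2 * ε ^ p) ^ (-s) = (2 / A) ^ s * (ε ^ p) ^ (-s) := by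
    rw [Real.mul_rpow (by positivity) (le_of_lt hεp)]
    congr 1
    rw [Real.rpow_neg (by positivity), ← Real.inv_rpow (by positivity)]
    congr 1
    field_simp
  have hRHS0 : 0 < B * (n:ℝ) * (A / 2 * ε ^ p) ^ (-s) := by
    have := Real.rpow_pos_of_pos (show (0:ℝ) < A / 2 * ε ^ p by positivity) (-s)
    positivity
  have hfin : Ψ ≤ (B * (n:ℝ) * (A / 2 * ε ^ p) ^ (-s)) ^ p⁻¹ := by
    have h1 : (Ψ ^ p) ^ p⁻¹ ≤ (B * (n:ℝ) * (A / 2 * ε ^ p) ^ (-s)) ^ p⁻¹ :=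
      Real.rpow_le_rpow (Real.rpow_nonneg hΨnn p) hΨple (by positivity)
    rwa [← Real.rpow_mul (le_of_lt hΨpos), mul_inv_cancel₀ hpne, Real.rpow_one] at h1
  have hsplit : (B * (n:ℝ) * (A / 2 * ε ^ p) ^ (-s)) ^ p⁻¹
      = C' * ε ^ (-(2:ℝ)/(n:ℝ)) := by
    rw [hAε, show B * (n:ℝ) * ((2 / A) ^ s * (ε ^ p) ^ (-s))
        = (B * (n:ℝ) * (2 / A) ^ s) * (ε ^ p) ^ (-s) by ring,
      Real.mul_rpow (le_of_lt hK0) (Real.rpow_nonneg (le_of_lt hεp) _),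
      hC'def]
    congr 1
    rw [← Real.rpow_mul hε.le, ← Real.rpow_mul hε.le]
    congr 1
    rw [hsdef]
    field_simp
  linarith [hfin, le_of_eq hsplit]
end
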